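/- arXiv:2006.04994 — 3 statements merged into one kernel-verified Lean document; each statement's English description precedes it below -/
import Mathlib

section
/- Let m > 2, r₀ > 0, 0 ≤ A < r₀^{m−1}, and set K₁ = (m−2)(r₀^{m−1} − A)/(A + (m−2)r₀^{m−1}). For any v ≥ r₀ and any real s with (1+s²)^{1/2} ≥ 1, one has v·(1+s²)^{1/2} − A v^{2−m} ≥ K₁ (v·(1+s²)^{1/2} + (A/(m−2)) v^{2−m}). -/
/-
Clearing the denominator of K₁, the gap between the two sides is
(m-1) A (v Φ - r₀^{m-1} v^{2-m}) / (A + (m-2) r₀^{m-1}),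
which is nonnegative because v Φ ≥ v = v^{m-1} v^{2-m} ≥ r₀^{m-1} v^{2-m}.
-/

lemma coercivity_gap_eq (m A R x w : ℝ) (hm : m - 2 ≠ 0) (hD : A + (m - 2) * R ≠ 0) :
    x - A * w - (m - 2) * (R - A) / (A + (m - 2) * R) * (x + A / (m - 2) * w) =
      (m - 1) * A * (x - R * w) / (A + (m - 2) * R) := by
  field_simp
  ring

lemma coercivity_le (m A R x w : ℝ) (hm : 2 < m) (hA : 0 ≤ A) (hR : 0 < R) (hx : R * w ≤ x) :
    (m - 2) * (R - A) / (A + (m - 2) * R) * (x + A / (m - 2) * w) ≤ x - A * w := by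
  have hD : 0 < A + (m - 2) * R := by nlinarith
  have hgap := coercivity_gap_eq m A R x w (by linarith) hD.ne'
  have : 0 ≤ (m - 1) * A * (x - R * w) / (A + (m - 2) * R) := by
    apply div_nonneg _ hD.le
    exact mul_nonneg (mul_nonneg (by linarith) hA) (by linarith)
  linarith

lemma Real.rpow_sub_one_mul_rpow_two_sub_le {r v m : ℝ} (hr : 0 < r) (hv : r ≤ v) (hm : 1 ≤ m) :
    r ^ (m - 1) * v ^ (2 - m) ≤ v := by
  have hv0 : 0 < v := hr.trans_le hv
  calc r ^ (m - 1) * v ^ (2 - m) ≤ v ^ (m - 1) * v ^ (2 - m) := by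
        gcongr
    _ = v := by rw [← Real.rpow_add hv0]; norm_num

theorem stmt_11_general (m r₀ A : ℝ) (hm : 2 < m) (hr₀ : 0 < r₀)
    (hA : 0 ≤ A)
    (K₁ : ℝ)
    (hK₁ : K₁ = (m - 2) * (r₀ ^ (m - 1) - A) / (A + (m - 2) * r₀ ^ (m - 1)))
    (v s : ℝ) (hv : r₀ ≤ v) :
    K₁ * (v * Real.sqrt (1 + s ^ 2) + (A / (m - 2)) * v ^ (2 - m)) ≤
      v * Real.sqrt (1 + s ^ 2) - A * v ^ (2 - m) := by
  have hΦ : 1 ≤ Real.sqrt (1 + s ^ 2) := Real.one_le_sqrt.mpr (by nlinarith)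
  have hvΦ : v ≤ v * Real.sqrt (1 + s ^ 2) :=
    le_mul_of_one_le_right (hr₀.trans_le hv).le hΦ
  subst hK₁
  exact coercivity_le m A _ _ _ hm hA (Real.rpow_pos_of_pos hr₀ _)
    ((Real.rpow_sub_one_mul_rpow_two_sub_le hr₀ hv (by linarith)).trans hvΦ)

theorem stmt_11 (m r₀ A : ℝ) (hm : 2 < m) (hr₀ : 0 < r₀)
    (hA : 0 ≤ A) (hA' : A < r₀ ^ (m - 1))
    (K₁ : ℝ)
    (hK₁ : K₁ = (m - 2) * (r₀ ^ (m - 1) - A) / (A + (m - 2) * r₀ ^ (m - 1)))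
    (v s : ℝ) (hv : r₀ ≤ v) :
    K₁ * (v * Real.sqrt (1 + s ^ 2) + (A / (m - 2)) * v ^ (2 - m)) ≤
      v * Real.sqrt (1 + s ^ 2) - A * v ^ (2 - m) :=
  stmt_11_general m r₀ A hm hr₀ hA K₁ hK₁ v s hv
end

section
/- Let L > 0, r₀ > 0, m > 2, A ≥ 0, and let v : [0,L] → ℝ be continuously differentiable with v ≥ r₀ and ∫₀^L v² dξ = M. Define E(v) = ∫₀^L [ v(1+v'²)^{1/2} + (A/(m−2)) v^{2−m} ] dξ and M-bar = M/L. Then E(v) ≥ (r₀ + (A/(m−2)) M-bar^{−(m−2)/2}) L. -/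
/-!
Since `√(1 + v'²) ≥ 1`, the arc-length term is at least `∫ v ≥ r₀ L`. For the potential term,
write `v^(2-m) = (v²)^(-p)` with `p = (m-2)/2 > 0`: the tangent line of the convex function
`t ↦ t^(-p)` at the mean value `c = M/L` of `v²` lies below it, and integrating this affine
minorant of `(v²)^(-p)` gives Jensen's inequality `∫ (v²)^(-p) ≥ L c^(-p)`.
The tangent-line inequality itself is weighted AM-GM for `t^(-p)` and `t`.
-/

open Set Real MeasureTheory

lemma one_add_le_rpow_neg_add_mul {p t : ℝ} (hp : 0 ≤ p) (ht : 0 < t) :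
    1 + p ≤ t ^ (-p) + p * t := by
  have h1p : 0 < 1 + p := by linarith
  have hamgm := geom_mean_le_arith_mean2_weighted (w₁ := 1 / (1 + p)) (w₂ := p / (1 + p))
    (by positivity) (by positivity) (rpow_nonneg ht.le (-p)) ht.le (by field_simp)
  have hgeom : (t ^ (-p)) ^ (1 / (1 + p)) * t ^ (p / (1 + p)) = 1 := by
    rw [← rpow_mul ht.le, ← rpow_add ht, show -p * (1 / (1 + p)) + p / (1 + p) = 0 by ring,
      rpow_zero]
  rw [hgeom] at hamgm
  have := mul_le_mul_of_nonneg_left hamgm h1p.le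
  field_simp at this
  linarith

lemma rpow_neg_tangent_le {p c x : ℝ} (hp : 0 ≤ p) (hc : 0 < c) (hx : 0 < x) :
    c ^ (-p) * (1 + p - p * (x / c)) ≤ x ^ (-p) := by
  have h := one_add_le_rpow_neg_add_mul hp (div_pos hx hc)
  rw [div_rpow hx.le hc.le, div_eq_mul_inv, ← rpow_neg hc.le, neg_neg] at h
  calc c ^ (-p) * (1 + p - p * (x / c)) ≤ c ^ (-p) * (x ^ (-p) * c ^ p) := by
        gcongr; linarith
    _ = x ^ (-p) := by
        rw [mul_left_comm, ← rpow_add hc, neg_add_cancel, rpow_zero, mul_one]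

lemma mul_rpow_neg_average_le_integral {f : ℝ → ℝ} {a b p : ℝ} (hab : a < b) (hp : 0 ≤ p)
    (hf : ContinuousOn f (Icc a b)) (hf_pos : ∀ x ∈ Icc a b, 0 < f x) :
    (b - a) * ((∫ x in a..b, f x) / (b - a)) ^ (-p) ≤ ∫ x in a..b, f x ^ (-p) := by
  set c := (∫ x in a..b, f x) / (b - a) with hc_def
  have hba : 0 < b - a := sub_pos.2 hab
  have hint : IntervalIntegrable f volume a b := hf.intervalIntegrable_of_Icc hab.le
  have hc : 0 < c := div_pos (intervalIntegral.intervalIntegral_pos_of_pos_on hint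
    (fun x hx => hf_pos x (Ioo_subset_Icc_self hx)) hab) hba
  calc (b - a) * c ^ (-p)
      = ∫ x in a..b, c ^ (-p) * (1 + p) - c ^ (-p) * p / c * f x := by
        have hmass : ∫ x in a..b, f x = c * (b - a) := by rw [hc_def]; field_simp
        rw [intervalIntegral.integral_sub intervalIntegrable_const (hint.const_mul _),
          intervalIntegral.integral_const_mul (c ^ (-p) * p / c), intervalIntegral.integral_const,
          smul_eq_mul, hmass]
        field_simp
        ring
    _ = ∫ x in a..b, c ^ (-p) * (1 + p - p * (f x / c)) := by
        congr 1; ext x; ring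
    _ ≤ ∫ x in a..b, f x ^ (-p) :=
        intervalIntegral.integral_mono_on hab.le
          ((intervalIntegrable_const.sub ((hint.div_const c).const_mul p)).const_mul _)
          ((hf.rpow_const fun x hx => Or.inl (hf_pos x hx).ne').intervalIntegrable_of_Icc hab.le)
          fun x hx => rpow_neg_tangent_le hp hc (hf_pos x hx)

theorem stmt_12 (L r₀ m A M : ℝ) (hL : 0 < L) (hr₀ : 0 < r₀) (hm : 2 < m)
    (hA : 0 ≤ A)
    (v v' : ℝ → ℝ)
    (hv : ∀ ξ ∈ Set.Icc 0 L, HasDerivAt v (v' ξ) ξ)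
    (hv' : ContinuousOn v' (Set.Icc 0 L))
    (hvr₀ : ∀ ξ ∈ Set.Icc 0 L, r₀ ≤ v ξ)
    (hM : ∫ ξ in (0:ℝ)..L, (v ξ) ^ 2 = M) :
    (r₀ + (A / (m - 2)) * (M / L) ^ (-(m - 2) / 2)) * L ≤
      ∫ ξ in (0:ℝ)..L,
        (v ξ * Real.sqrt (1 + (v' ξ) ^ 2) + (A / (m - 2)) * (v ξ) ^ (2 - m)) := by
  have hv_cont : ContinuousOn v (Icc 0 L) := fun ξ hξ =>
    (hv ξ hξ).continuousAt.continuousWithinAt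
  have hv_pos : ∀ ξ ∈ Icc 0 L, 0 < v ξ := fun ξ hξ => hr₀.trans_le (hvr₀ ξ hξ)
  have harea_cont : ContinuousOn (fun ξ => v ξ * √(1 + v' ξ ^ 2)) (Icc 0 L) :=
    hv_cont.mul (continuousOn_const.add (hv'.pow 2)).sqrt
  have hpot_cont : ContinuousOn (fun ξ => v ξ ^ (2 - m)) (Icc 0 L) :=
    hv_cont.rpow_const fun ξ hξ => Or.inl (hv_pos ξ hξ).ne'
  have harea : r₀ * L ≤ ∫ ξ in 0..L, v ξ * √(1 + v' ξ ^ 2) := by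
    have := intervalIntegral.integral_mono_on (μ := volume) hL.le intervalIntegrable_const
      (harea_cont.intervalIntegrable_of_Icc hL.le) fun ξ hξ =>
        (hvr₀ ξ hξ).trans (le_mul_of_one_le_right (hv_pos ξ hξ).le
          (one_le_sqrt.2 (le_add_of_nonneg_right (sq_nonneg (v' ξ)))))
    simpa [mul_comm] using this
  have hpot : L * (M / L) ^ (-(m - 2) / 2) ≤ ∫ ξ in 0..L, v ξ ^ (2 - m) := by
    have h := mul_rpow_neg_average_le_integral (f := fun ξ => v ξ ^ 2) (p := (m - 2) / 2) hL
      (by linarith) (hv_cont.pow 2) fun ξ hξ => pow_pos (hv_pos ξ hξ) 2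
    rw [sub_zero, hM, ← neg_div] at h
    refine h.trans_eq (intervalIntegral.integral_congr fun ξ hξ => ?_)
    rw [uIcc_of_le hL.le] at hξ
    rw [← rpow_natCast, ← rpow_mul (hv_pos ξ hξ).le]
    congr 1; push_cast; ring
  have hcoef : 0 ≤ A / (m - 2) := div_nonneg hA (by linarith)
  rw [intervalIntegral.integral_add (harea_cont.intervalIntegrable_of_Icc hL.le)
    ((hpot_cont.intervalIntegrable_of_Icc hL.le).const_mul _), intervalIntegral.integral_const_mul]
  linear_combination harea + mul_le_mul_of_nonneg_left hpot hcoef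
end

section
/- Let v be a C¹ L-periodic function with v ≥ r₀ > 0, and define J(v) = (Φ'(v'))' − v^{-1} f(v') + A v^{-m} where f(z) = (1+z²)^{-1/2}, Φ'(z) = z f(z), and v is C². Then ∫₀^L (v²)' · J(v) dξ = 0. -/
/-!
Since `f' z = -z f(z)³` and `(z f z)' = f(z)³`, all terms of `(v²)' J(v)` except the pressure
term add up to the exact derivative `(-2 v f(v'))'`. The pressure term `2A v^{1-m} v'`
integrates, after the substitution `u = v ξ`, over the interval from `v 0` to `v L`, which is a
single point; so no case split on the primitive of `u^{1-m}` (a logarithm when `m = 2`) is needed.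
-/

open intervalIntegral

noncomputable def f (z : ℝ) : ℝ := (Real.sqrt (1 + z ^ 2))⁻¹

lemma f_sq_mul (z : ℝ) : f z ^ 2 * (1 + z ^ 2) = 1 := by
  have hpos : 0 < 1 + z ^ 2 := by positivity
  rw [f, inv_pow, Real.sq_sqrt hpos.le, inv_mul_cancel₀ hpos.ne']

@[fun_prop]
lemma continuous_f : Continuous f :=
  (Real.continuous_sqrt.comp (by fun_prop)).inv₀ fun z => (Real.sqrt_pos.2 (by positivity)).ne'

lemma hasDerivAt_f (z : ℝ) : HasDerivAt f (-z * f z ^ 3) z := by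
  have hpos : 0 < 1 + z ^ 2 := by positivity
  have hs : Real.sqrt (1 + z ^ 2) ≠ 0 := (Real.sqrt_pos.2 hpos).ne'
  have hsqrt : HasDerivAt (fun z => Real.sqrt (1 + z ^ 2)) (z / Real.sqrt (1 + z ^ 2)) z :=
    (((hasDerivAt_pow 2 z).const_add 1).sqrt hpos.ne').congr_deriv (by field_simp; ring)
  refine (hsqrt.inv hs).congr_deriv ?_
  rw [f]
  field_simp

lemma hasDerivAt_mul_f (z : ℝ) : HasDerivAt (fun z => z * f z) (f z ^ 3) z :=
  ((hasDerivAt_id' z).mul (hasDerivAt_f z)).congr_deriv (by linear_combination (-f z) * f_sq_mul z)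

section Flux

variable {v v' v'' : ℝ → ℝ} {ξ : ℝ}

lemma deriv_mul_f_comp (hv' : HasDerivAt v' (v'' ξ) ξ) :
    deriv (fun x => v' x * f (v' x)) ξ = v'' ξ * f (v' ξ) ^ 3 :=
  ((hasDerivAt_mul_f (v' ξ)).comp ξ hv').deriv.trans (mul_comm _ _)

lemma hasDerivAt_neg_two_mul_mul_f_comp (hv : HasDerivAt v (v' ξ) ξ)
    (hv' : HasDerivAt v' (v'' ξ) ξ) :
    HasDerivAt (fun x => -2 * v x * f (v' x))
      (2 * v ξ * v' ξ * (v'' ξ * f (v' ξ) ^ 3) - 2 * v' ξ * f (v' ξ)) ξ :=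
  ((hv.const_mul (-2)).mul ((hasDerivAt_f (v' ξ)).comp ξ hv')).congr_deriv
    (by rw [Function.comp_apply]; ring)

lemma energy_integrand_eq_flux_add_pressure (A m : ℝ) (hv : 0 < v ξ)
    (hv' : HasDerivAt v' (v'' ξ) ξ) :
    2 * v ξ * v' ξ * (deriv (fun x => v' x * f (v' x)) ξ - f (v' ξ) / v ξ + A * v ξ ^ (-m)) =
      (2 * v ξ * v' ξ * (v'' ξ * f (v' ξ) ^ 3) - 2 * v' ξ * f (v' ξ))
        + 2 * A * v ξ ^ (1 - m) * v' ξ := by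
  have hvm : v ξ ^ (1 - m) = v ξ * v ξ ^ (-m) := by
    rw [sub_eq_neg_add, Real.rpow_add hv, Real.rpow_one, mul_comm]
  rw [deriv_mul_f_comp hv', hvm]
  field_simp [hv.ne']

end Flux

lemma integral_comp_mul_deriv_eq_zero_of_eq {a b : ℝ} {v v' g : ℝ → ℝ}
    (hv : ∀ x, HasDerivAt v (v' x) x) (hv' : Continuous v')
    (hg : ContinuousOn g (v '' Set.uIcc a b)) (hab : v a = v b) :
    ∫ x in a..b, g (v x) * v' x = 0 := by
  rw [← integral_same (f := g) (a := v a)]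
  nth_rewrite 2 [hab]
  exact integral_comp_mul_deriv' (fun x _ => hv x) hv'.continuousOn hg

theorem stmt_13_general (L r₀ A m : ℝ) (hr₀ : 0 < r₀)
    (v v' v'' : ℝ → ℝ)
    (hv : ∀ ξ, HasDerivAt v (v' ξ) ξ)
    (hv' : ∀ ξ, HasDerivAt v' (v'' ξ) ξ)
    (hv'' : Continuous v'')
    (hvr₀ : ∀ ξ, r₀ ≤ v ξ)
    (hper : v 0 = v L) (hper' : v' 0 = v' L)
    (J : ℝ → ℝ)
    (hJ : ∀ ξ, J ξ = deriv (fun x => v' x * f (v' x)) ξ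
          - f (v' ξ) / v ξ + A * (v ξ) ^ (-m)) :
    ∫ ξ in (0:ℝ)..L, (2 * v ξ * v' ξ) * J ξ = 0 := by
  have hvpos : ∀ ξ, 0 < v ξ := fun ξ => hr₀.trans_le (hvr₀ ξ)
  have hcv : Continuous v := continuous_iff_continuousAt.2 fun ξ => (hv ξ).continuousAt
  have hcv' : Continuous v' := continuous_iff_continuousAt.2 fun ξ => (hv' ξ).continuousAt
  set flux := fun ξ => 2 * v ξ * v' ξ * (v'' ξ * f (v' ξ) ^ 3) - 2 * v' ξ * f (v' ξ)
  have hflux_cont : Continuous flux := by fun_prop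
  have hsplit : ∀ ξ, 2 * v ξ * v' ξ * J ξ = flux ξ + 2 * A * v ξ ^ (1 - m) * v' ξ := by
    intro ξ
    rw [hJ, energy_integrand_eq_flux_add_pressure A m (hvpos ξ) (hv' ξ)]
  have hflux : ∫ ξ in (0:ℝ)..L, flux ξ = 0 := by
    rw [integral_eq_sub_of_hasDerivAt
      (fun ξ _ => hasDerivAt_neg_two_mul_mul_f_comp (hv ξ) (hv' ξ))
      (hflux_cont.intervalIntegrable 0 L), hper, hper', sub_self]
  have hG : ContinuousOn (fun u : ℝ => 2 * A * u ^ (1 - m)) (Set.Ioi 0) := fun u hu =>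
    (continuousAt_const.mul
      (Real.continuousAt_rpow_const _ _ (Or.inl (ne_of_gt hu)))).continuousWithinAt
  have hpressure : ∫ ξ in (0:ℝ)..L, 2 * A * v ξ ^ (1 - m) * v' ξ = 0 :=
    integral_comp_mul_deriv_eq_zero_of_eq (g := fun u => 2 * A * u ^ (1 - m)) hv hcv'
      (hG.mono (Set.image_subset_iff.2 fun ξ _ => hvpos ξ)) hper
  have hpressure_cont : Continuous fun ξ => 2 * A * v ξ ^ (1 - m) * v' ξ :=
    (hG.comp_continuous hcv hvpos).mul hcv'
  simp_rw [hsplit]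
  rw [integral_add (hflux_cont.intervalIntegrable 0 L) (hpressure_cont.intervalIntegrable 0 L),
    hflux, hpressure, add_zero]

theorem stmt_13 (L r₀ A m : ℝ) (hL : 0 < L) (hr₀ : 0 < r₀)
    (v v' v'' : ℝ → ℝ)
    (hv : ∀ ξ, HasDerivAt v (v' ξ) ξ)
    (hv' : ∀ ξ, HasDerivAt v' (v'' ξ) ξ)
    (hv'' : Continuous v'')
    (hvr₀ : ∀ ξ, r₀ ≤ v ξ)
    (hper : v 0 = v L) (hper' : v' 0 = v' L)
    (J : ℝ → ℝ)
    (hJ : ∀ ξ, J ξ = deriv (fun x => v' x * f (v' x)) ξ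
          - f (v' ξ) / v ξ + A * (v ξ) ^ (-m)) :
    ∫ ξ in (0:ℝ)..L, (2 * v ξ * v' ξ) * J ξ = 0 :=
  stmt_13_general L r₀ A m hr₀ v v' v'' hv hv' hv'' hvr₀ hper hper' J hJ
end
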